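/- arXiv:1909.07895 — 8 statements merged into one kernel-verified Lean document; each statement's English description precedes it below -/
import Mathlib

section
/- If f : [α, β] → ℝ is continuous and has nonnegative left derivative at every point of (α, β], then f is monotonically increasing on [α, β]. -/
/-! The reflection `t ↦ -f (-t)` turns left derivatives of `f` into right derivatives, and for
right derivatives monotonicity is the comparison principle
`image_le_of_deriv_right_le_deriv_boundary` applied against a constant function. -/

open Set Filter Topology

theorem monotoneOn_of_hasDerivWithinAt_Ici_nonneg {f f' : ℝ → ℝ} {a b : ℝ}
    (hf : ContinuousOn f (Icc a b)) (hf' : ∀ x ∈ Ico a b, HasDerivWithinAt f (f' x) (Ici x) x)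
    (hf'₀ : ∀ x ∈ Ico a b, 0 ≤ f' x) : MonotoneOn f (Icc a b) := by
  intro x hx y hy hxy
  have hsub : Icc x y ⊆ Icc a b := Icc_subset_Icc hx.1 hy.2
  have hsub' : Ico x y ⊆ Ico a b := Ico_subset_Ico hx.1 hy.2
  exact image_le_of_deriv_right_le_deriv_boundary (f' := 0) continuousOn_const
    (fun t _ => hasDerivWithinAt_const t _ (f x)) le_rfl (hf.mono hsub)
    (fun t ht => hf' t (hsub' ht)) (fun t ht => hf'₀ t (hsub' ht)) ⟨hxy, le_rfl⟩

theorem monotoneOn_of_hasDerivWithinAt_Iic_nonneg {f f' : ℝ → ℝ} {a b : ℝ}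
    (hf : ContinuousOn f (Icc a b)) (hf' : ∀ x ∈ Ioc a b, HasDerivWithinAt f (f' x) (Iic x) x)
    (hf'₀ : ∀ x ∈ Ioc a b, 0 ≤ f' x) : MonotoneOn f (Icc a b) := by
  have hg : MonotoneOn (fun t => -f (-t)) (Icc (-b) (-a)) := by
    refine monotoneOn_of_hasDerivWithinAt_Ici_nonneg (f' := fun t => f' (-t)) ?_ (fun t ht => ?_)
      (fun t ht => hf'₀ _ (neg_mem_Ioc_iff.2 ht))
    · exact (hf.comp continuous_neg.continuousOn fun t ht => neg_mem_Icc_iff.2 ht).neg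
    · have hmaps : MapsTo Neg.neg (Ici t) (Iic (-t)) := fun s hs => neg_le_neg (mem_Ici.1 hs)
      exact ((hf' _ (neg_mem_Ioc_iff.2 ht)).comp t (hasDerivAt_neg' t).hasDerivWithinAt
        hmaps).neg.congr_deriv (by ring)
  intro x hx y hy hxy
  simpa using hg (neg_mem_Icc_iff.2 (by rwa [neg_neg, neg_neg]) : -y ∈ _)
    (neg_mem_Icc_iff.2 (by rwa [neg_neg, neg_neg]) : -x ∈ _) (neg_le_neg hxy)

theorem hasDerivWithinAt_Iic_of_tendsto_left_diff_quot {f : ℝ → ℝ} {x L : ℝ}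
    (h : Tendsto (fun ε => (f x - f (x - ε)) / ε) (𝓝[>] 0) (𝓝 L)) :
    HasDerivWithinAt f L (Iic x) x := by
  have hsub : Tendsto (fun t => x - t) (𝓝[<] x) (𝓝[>] 0) :=
    tendsto_nhdsWithin_of_tendsto_nhds_of_eventually_within _
      (by simpa using ((continuous_sub_left x).tendsto x).mono_left nhdsWithin_le_nhds)
      (eventually_nhdsWithin_of_forall fun t ht => sub_pos.2 (mem_Iio.1 ht))
  refine ((hasDerivWithinAt_iff_tendsto_slope' self_notMem_Iio).2 ?_).Iic_of_Iio
  refine (h.comp hsub).congr fun t => ?_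
  simp only [Function.comp_apply, sub_sub_cancel, slope_def_field]
  rw [← neg_sub t x, div_neg, ← neg_div, neg_sub]

theorem stmt0_general (f : ℝ → ℝ) (α β : ℝ)
    (hcont : ContinuousOn f (Set.Icc α β))
    (hderiv : ∀ x ∈ Set.Ioc α β, ∃ L, 0 ≤ L ∧
      Filter.Tendsto (fun ε => (f x - f (x - ε)) / ε) (nhdsWithin 0 (Set.Ioi 0)) (nhds L)) :
    MonotoneOn f (Set.Icc α β) := by
  choose! L hL₀ hL using hderiv
  exact monotoneOn_of_hasDerivWithinAt_Iic_nonneg hcont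
    (fun x hx => hasDerivWithinAt_Iic_of_tendsto_left_diff_quot (hL x hx)) hL₀

/-- If `f` is continuous on `[α, β]` and has a nonnegative left derivative at every
point of `(α, β]`, then `f` is monotonically increasing on `[α, β]`. -/
theorem stmt0 (f : ℝ → ℝ) (α β : ℝ) (hαβ : α ≤ β)
    (hcont : ContinuousOn f (Set.Icc α β))
    (hderiv : ∀ x ∈ Set.Ioc α β, ∃ L, 0 ≤ L ∧
      Filter.Tendsto (fun ε => (f x - f (x - ε)) / ε) (nhdsWithin 0 (Set.Ioi 0)) (nhds L)) :
    MonotoneOn f (Set.Icc α β) :=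
  stmt0_general f α β hcont hderiv
end

section
/- Let r' be continuous, positive and strictly decreasing on an interval, and let X be a nonnegative random variable with ρ(x) = P(X < x), x̲ = max{x ≥ 0 : ρ(x) = 0} < ∞. Then r'(x̲) > P(X = x̲)·r'(x̲) whenever P(X = x̲) < 1, hence the set {c ≥ 0 : r'(c) ≥ E[r'(X)·1{X<c}]} contains a right neighborhood of x̲ and is an interval of the form [0, c*] for some c* > x̲. -/
open MeasureTheory

open Filter Topology Set

/-!
`G c = E[r'(X); X < c]` is nondecreasing and left-continuous in `c` while `r'` is continuous and
decreasing, so `{c | G c ≤ r' c}` is a half-line `(-∞, c*]` once it is neither empty nor all of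
`ℝ`. It contains points `c > x̲` because `G c → P(X = x̲) r'(x̲) < r'(x̲)` as `c ↓ x̲`, and it is
bounded above because `G c → E[r'(X)] > inf r'` as `c → ∞`.
-/

section SetIntegralLt

variable {Ω : Type*} [MeasurableSpace Ω] {μ : Measure Ω} {f : Ω → ℝ}

theorem tendsto_setIntegral_of_ae_eventually_mem_iff {ι : Type*} {l : Filter ι}
    [l.IsCountablyGenerated] {s : ι → Set Ω} {t : Set Ω} (hs : ∀ i, MeasurableSet (s i))
    (ht : MeasurableSet t) (hf : Integrable f μ)
    (h_lim : ∀ᵐ ω ∂μ, ∀ᶠ i in l, ω ∈ s i ↔ ω ∈ t) :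
    Tendsto (fun i => ∫ ω in s i, f ω ∂μ) l (𝓝 (∫ ω in t, f ω ∂μ)) := by
  simp only [← integral_indicator (hs _), ← integral_indicator ht]
  refine tendsto_integral_filter_of_dominated_convergence (fun ω => ‖f ω‖)
    (Eventually.of_forall fun i => hf.aestronglyMeasurable.indicator (hs i))
    (Eventually.of_forall fun i => ae_of_all _ fun ω => norm_indicator_le_norm_self _ _)
    hf.norm ?_
  filter_upwards [h_lim] with ω hω
  refine tendsto_const_nhds.congr' ?_
  filter_upwards [hω] with i hi
  by_cases hωt : ω ∈ t
  · rw [indicator_of_mem hωt, indicator_of_mem (hi.2 hωt)]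
  · rw [indicator_of_notMem hωt, indicator_of_notMem (mt hi.1 hωt)]

variable {X : Ω → ℝ}

theorem tendsto_setIntegral_lt_nhdsLT (hX : Measurable X) (hf : Integrable f μ) (a : ℝ) :
    Tendsto (fun c => ∫ ω in {ω | X ω < c}, f ω ∂μ) (𝓝[<] a)
      (𝓝 (∫ ω in {ω | X ω < a}, f ω ∂μ)) := by
  refine tendsto_setIntegral_of_ae_eventually_mem_iff (fun c => hX measurableSet_Iio)
    (hX measurableSet_Iio) hf (ae_of_all _ fun ω => ?_)
  rcases lt_or_ge (X ω) a with h | h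
  · filter_upwards [nhdsWithin_le_nhds (Ioi_mem_nhds h)] with c hc
    exact iff_of_true hc h
  · filter_upwards [self_mem_nhdsWithin] with c (hc : c < a)
    exact iff_of_false (hc.trans_le h).not_gt h.not_gt

theorem tendsto_setIntegral_lt_nhdsGT (hX : Measurable X) (hf : Integrable f μ) (a : ℝ) :
    Tendsto (fun c => ∫ ω in {ω | X ω < c}, f ω ∂μ) (𝓝[>] a)
      (𝓝 (∫ ω in {ω | X ω ≤ a}, f ω ∂μ)) := by
  refine tendsto_setIntegral_of_ae_eventually_mem_iff (fun c => hX measurableSet_Iio)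
    (hX measurableSet_Iic) hf (ae_of_all _ fun ω => ?_)
  rcases le_or_gt (X ω) a with h | h
  · filter_upwards [self_mem_nhdsWithin] with c (hc : a < c)
    exact iff_of_true (h.trans_lt hc) h
  · filter_upwards [nhdsWithin_le_nhds (Iio_mem_nhds h)] with c (hc : c < X ω)
    exact iff_of_false hc.not_gt h.not_ge

theorem tendsto_setIntegral_lt_atTop (hX : Measurable X) (hf : Integrable f μ) :
    Tendsto (fun c => ∫ ω in {ω | X ω < c}, f ω ∂μ) atTop (𝓝 (∫ ω, f ω ∂μ)) := by
  rw [← setIntegral_univ]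
  refine tendsto_setIntegral_of_ae_eventually_mem_iff (fun c => hX measurableSet_Iio)
    MeasurableSet.univ hf (ae_of_all _ fun ω => ?_)
  filter_upwards [eventually_gt_atTop (X ω)] with c hc
  simpa using hc

theorem monotone_setIntegral_lt (hf : Integrable f μ) (hf_nonneg : 0 ≤ᵐ[μ] f) :
    Monotone fun c => ∫ ω in {ω | X ω < c}, f ω ∂μ := fun _ _ hab =>
  setIntegral_mono_set hf.integrableOn (ae_restrict_of_ae hf_nonneg)
    (Eventually.of_forall fun _ h => lt_of_lt_of_le h hab)

end SetIntegralLt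

theorem exists_setOf_le_eq_Iic {G g : ℝ → ℝ} (hG : Monotone G)
    (hG_left : ∀ c, Tendsto G (𝓝[<] c) (𝓝 (G c))) (hg : Antitone g) (hg_cont : Continuous g)
    {a b : ℝ} (ha : G a ≤ g a) (hb : g b < G b) : ∃ c, {x | G x ≤ g x} = Iic c := by
  set T := {x | G x ≤ g x}
  have hlower : ∀ x ∈ T, ∀ y ≤ x, y ∈ T := fun x hx y hyx =>
    (hG hyx).trans (hx.trans (hg hyx))
  have hbdd : BddAbove T := ⟨b, fun x hx => not_lt.1 fun hbx => hb.not_ge (hlower x hx b hbx.le)⟩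
  have hmem : sSup T ∈ T := by
    refine le_of_tendsto_of_tendsto (hG_left _) (hg_cont.continuousWithinAt.tendsto) ?_
    filter_upwards [self_mem_nhdsWithin] with x (hx : x < sSup T)
    obtain ⟨y, hyT, hxy⟩ := exists_lt_of_lt_csSup ⟨a, ha⟩ hx
    exact hlower y hyT x hxy.le
  exact ⟨sSup T, Subset.antisymm (fun x hx => le_csSup hbdd hx) fun x hx => hlower _ hmem x hx⟩

section AntitoneComp

variable {Ω : Type*} [MeasurableSpace Ω] {μ : Measure Ω} {X : Ω → ℝ} {g : ℝ → ℝ} {a : ℝ}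

theorem ae_le_of_measure_setOf_lt_eq_zero (ha : μ {ω | X ω < a} = 0) : ∀ᵐ ω ∂μ, a ≤ X ω := by
  simpa only [ae_iff, not_le] using ha

theorem Antitone.integrable_comp_of_ae_le [IsFiniteMeasure μ] (hg : Antitone g)
    (hg_nonneg : ∀ x, 0 ≤ g x) (hX : Measurable X) (ha : ∀ᵐ ω ∂μ, a ≤ X ω) :
    Integrable (fun ω => g (X ω)) μ := by
  refine Integrable.mono' (integrable_const (g a)) (hg.measurable.comp hX).aestronglyMeasurable ?_
  filter_upwards [ha] with ω hω
  rw [Real.norm_of_nonneg (hg_nonneg _)]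
  exact hg hω

theorem setIntegral_le_eq_measureReal_mul (hX : Measurable X) (ha : μ {ω | X ω < a} = 0) :
    ∫ ω in {ω | X ω ≤ a}, g (X ω) ∂μ = μ.real {ω | X ω = a} * g a := by
  have hsplit : {ω | X ω ≤ a} = {ω | X ω < a} ∪ {ω | X ω = a} := by
    ext ω; simp [le_iff_lt_or_eq]
  rw [hsplit, setIntegral_congr_set (union_ae_eq_right_of_ae_eq_empty (ae_eq_empty.2 ha)),
    setIntegral_congr_fun (measurableSet_eq_fun hX measurable_const) fun ω (hω : X ω = a) => by
      rw [hω], setIntegral_const, smul_eq_mul]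

theorem exists_gt_setIntegral_lt_le (hX : Measurable X) (hint : Integrable (fun ω => g (X ω)) μ)
    (hg_cont : Continuous g) (ha : μ {ω | X ω < a} = 0)
    (hatom : μ.real {ω | X ω = a} * g a < g a) :
    ∃ c, a < c ∧ ∫ ω in {ω | X ω < c}, g (X ω) ∂μ ≤ g c := by
  have hlim := (tendsto_setIntegral_lt_nhdsGT hX hint a).sub
    (hg_cont.continuousWithinAt (s := Ioi a) (x := a)).tendsto
  rw [setIntegral_le_eq_measureReal_mul hX ha] at hlim
  obtain ⟨c, hc, hca⟩ :=
    ((hlim.eventually (gt_mem_nhds (sub_neg.2 hatom))).and self_mem_nhdsWithin).exists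
  exact ⟨c, hca, (sub_neg.1 hc).le⟩

theorem exists_lt_integral_comp [IsProbabilityMeasure μ] (hg : StrictAnti g)
    (hg_pos : ∀ x, 0 < g x) (hint : Integrable (fun ω => g (X ω)) μ) :
    ∃ b, g b < ∫ ω, g (X ω) ∂μ := by
  have hbdd : BddBelow (range g) := ⟨0, forall_mem_range.2 fun x => (hg_pos x).le⟩
  set L := ⨅ x, g x
  have hL : ∀ ω, L < g (X ω) := fun ω =>
    (ciInf_le hbdd (X ω + 1)).trans_lt (hg (lt_add_one _))
  have hpos : 0 < ∫ ω, (g (X ω) - L) ∂μ := by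
    rw [integral_pos_iff_support_of_nonneg (fun ω => (sub_pos.2 (hL ω)).le)
      (hint.sub (integrable_const L))]
    simp [Function.support, sub_eq_zero, (hL _).ne']
  rw [integral_sub hint (integrable_const L), integral_const, probReal_univ, one_smul,
    sub_pos] at hpos
  exact ((tendsto_atTop_ciInf hg.antitone hbdd).eventually (gt_mem_nhds hpos)).exists

theorem exists_lt_setIntegral_lt [IsProbabilityMeasure μ] (hX : Measurable X) (hg : StrictAnti g)
    (hg_pos : ∀ x, 0 < g x) (hint : Integrable (fun ω => g (X ω)) μ) :
    ∃ b, g b < ∫ ω in {ω | X ω < b}, g (X ω) ∂μ := by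
  obtain ⟨b₀, hb₀⟩ := exists_lt_integral_comp hg hg_pos hint
  obtain ⟨b, hb, hbb₀⟩ := (((tendsto_setIntegral_lt_atTop hX hint).eventually
    (lt_mem_nhds hb₀)).and (eventually_ge_atTop b₀)).exists
  exact ⟨b, (hg.antitone hbb₀).trans_lt hb⟩

end AntitoneComp

theorem stmt3_general {Ω : Type*} [MeasurableSpace Ω] (μ : Measure Ω) [IsProbabilityMeasure μ]
    (X : Ω → ℝ) (hX : Measurable X)
    (r' : ℝ → ℝ) (hr'cont : Continuous r') (hr'pos : ∀ x, 0 < r' x)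
    (hr'anti : StrictAnti r')
    (xlow : ℝ)
    (hxlow : IsGreatest {x : ℝ | 0 ≤ x ∧ μ {ω | X ω < x} = 0} xlow)
    (hatom : μ {ω | X ω = xlow} < 1) :
    ((μ {ω | X ω = xlow}).toReal * r' xlow < r' xlow) ∧
    ∃ cstar : ℝ, xlow < cstar ∧
      {c : ℝ | 0 ≤ c ∧ (∫ ω in {ω | X ω < c}, r' (X ω) ∂μ) ≤ r' c} = Set.Icc 0 cstar := by
  obtain ⟨⟨-, hnull⟩, -⟩ := hxlow
  have hint : Integrable (fun ω => r' (X ω)) μ := hr'anti.antitone.integrable_comp_of_ae_le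
    (fun x => (hr'pos x).le) hX (ae_le_of_measure_setOf_lt_eq_zero hnull)
  have hatom' : (μ {ω | X ω = xlow}).toReal * r' xlow < r' xlow :=
    mul_lt_of_lt_one_left (hr'pos xlow) (ENNReal.toReal_lt_of_lt_ofReal (by simpa using hatom))
  obtain ⟨c₀, hxc₀, hc₀⟩ := exists_gt_setIntegral_lt_le hX hint hr'cont hnull hatom'
  obtain ⟨b, hb⟩ := exists_lt_setIntegral_lt hX hr'anti hr'pos hint
  obtain ⟨cstar, hT⟩ := exists_setOf_le_eq_Iic
    (monotone_setIntegral_lt hint (ae_of_all _ fun ω => (hr'pos (X ω)).le))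
    (tendsto_setIntegral_lt_nhdsLT hX hint) hr'anti.antitone hr'cont hc₀ hb
  refine ⟨hatom', cstar, hxc₀.trans_le (hT.subset hc₀), ?_⟩
  ext c
  exact and_congr_right' (Set.ext_iff.1 hT c)

/-- With `r'` continuous positive strictly decreasing and `x̲` the maximal point where
`P(X < x) = 0`, if `P(X = x̲) < 1` then `r'(x̲) > P(X = x̲)·r'(x̲)`, and the set
`{c ≥ 0 : r'(c) ≥ E[r'(X)·1{X<c}]}` is an interval `[0, c*]` with `c* > x̲`. -/
theorem stmt3 {Ω : Type*} [MeasurableSpace Ω] (μ : Measure Ω) [IsProbabilityMeasure μ]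
    (X : Ω → ℝ) (hX : Measurable X) (hXnn : ∀ ω, 0 ≤ X ω)
    (r' : ℝ → ℝ) (hr'cont : Continuous r') (hr'pos : ∀ x, 0 < r' x)
    (hr'anti : StrictAnti r')
    (xlow : ℝ)
    (hxlow : IsGreatest {x : ℝ | 0 ≤ x ∧ μ {ω | X ω < x} = 0} xlow)
    (xup : ℝ) (hxup : xlow < xup)
    (hgap : r' xup < r' xlow)
    (hatom : μ {ω | X ω = xlow} < 1) :
    ((μ {ω | X ω = xlow}).toReal * r' xlow < r' xlow) ∧
    ∃ cstar : ℝ, xlow < cstar ∧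
      {c : ℝ | 0 ≤ c ∧ (∫ ω in {ω | X ω < c}, r' (X ω) ∂μ) ≤ r' c} = Set.Icc 0 cstar :=
  stmt3_general μ X hX r' hr'cont hr'pos hr'anti xlow hxlow hatom
end

section
/- For r(x) = ½log(1+x) and X uniform on [0, ω], the threshold c* satisfies ((1+c*)/ω)·log(1+c*) = 1, and as μ = ω/2 → 0, c* ∼ 2μ, i.e., lim_{μ↓0} c*/(2μ) = 1. -/
/-!
The integral equation reads `1/(1+c) = log(1+c)/ω`, i.e. `(1+c) log(1+c) = ω`. Since
`x/(1+x) ≤ log(1+x) ≤ x`, the function `(1+x) log(1+x)` lies between `x` and `x(1+x)`, so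
`c ≤ ω ≤ c(1+c) ≤ c(1+ω)`, which squeezes `c/ω` between `1/(1+ω)` and `1`.
-/

open Filter Set Real

lemma integral_one_div_one_add {b : ℝ} (hb : -1 < b) :
    ∫ x in (0:ℝ)..b, 1 / (1 + x) = log (1 + b) := by
  have h : (0:ℝ) ∉ uIcc (1 + 0) (1 + b) := by
    rw [add_zero, mem_uIcc]
    rintro (⟨h1, -⟩ | ⟨h1, -⟩) <;> linarith
  rw [intervalIntegral.integral_comp_add_left (fun x => 1 / x), integral_one_div h, add_zero,
    div_one]

lemma one_add_mul_log_one_add_eq_of_inv_eq_integral {ω c : ℝ} (hω : ω ≠ 0) (hc : -1 < c)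
    (h : 1 / (1 + c) = ∫ x in (0:ℝ)..c, (1 / ω) / (1 + x)) :
    (1 + c) * log (1 + c) = ω := by
  simp_rw [div_eq_mul_one_div (1 / ω)] at h
  rw [intervalIntegral.integral_const_mul, integral_one_div_one_add hc] at h
  have h1c : 1 + c ≠ 0 := by linarith
  field_simp at h
  linarith

lemma le_one_add_mul_log_one_add {x : ℝ} (hx : -1 < x) : x ≤ (1 + x) * log (1 + x) := by
  have hpos : 0 < 1 + x := by linarith
  have h := one_sub_inv_le_log_of_pos hpos
  calc x = (1 + x) * (1 - (1 + x)⁻¹) := by field_simp; ring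
    _ ≤ (1 + x) * log (1 + x) := by gcongr

lemma one_add_mul_log_one_add_le {x : ℝ} (hx : -1 < x) : (1 + x) * log (1 + x) ≤ (1 + x) * x := by
  have hpos : 0 < 1 + x := by linarith
  have h := log_le_sub_one_of_pos hpos
  gcongr
  linarith

lemma div_mem_Icc_of_one_add_mul_log_one_add_eq {ω c : ℝ} (hω : 0 < ω) (hc : 0 ≤ c)
    (h : (1 + c) * log (1 + c) = ω) : c / ω ∈ Icc (1 / (1 + ω)) 1 := by
  have hcω : c ≤ ω := h ▸ le_one_add_mul_log_one_add (by linarith)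
  have hωc : ω ≤ (1 + c) * c := h ▸ one_add_mul_log_one_add_le (by linarith)
  constructor
  · rw [div_le_div_iff₀ (by linarith) hω]
    nlinarith
  · rw [div_le_one hω]
    exact hcω

/-- For `X` uniform on `[0, ω]` (mean `μ = ω/2`), the threshold satisfies
`((1+c*)/ω)·log(1+c*) = 1` and `c* ∼ 2μ` as `μ ↓ 0`. -/
theorem stmt14 (c : ℝ → ℝ)
    (hc : ∀ μ > (0:ℝ), 0 < c μ ∧
      1 / (1 + c μ) = ∫ x in (0:ℝ)..(c μ), (1/(2*μ)) / (1+x)) :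
    (∀ μ > (0:ℝ), (1 + c μ) / (2*μ) * Real.log (1 + c μ) = 1) ∧
    Filter.Tendsto (fun μ => c μ / (2*μ)) (nhdsWithin 0 (Set.Ioi 0)) (nhds 1) := by
  have key : ∀ μ > (0:ℝ), (1 + c μ) * log (1 + c μ) = 2 * μ := fun μ hμ =>
    one_add_mul_log_one_add_eq_of_inv_eq_integral (by positivity) (by linarith [(hc μ hμ).1])
      (hc μ hμ).2
  refine ⟨fun μ hμ => ?_, ?_⟩
  · rw [div_mul_eq_mul_div, key μ hμ, div_self (by positivity)]
  have hlower : Tendsto (fun μ : ℝ => 1 / (1 + 2 * μ)) (nhdsWithin 0 (Ioi 0)) (nhds 1) := by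
    have : ContinuousAt (fun μ : ℝ => 1 / (1 + 2 * μ)) 0 := by fun_prop (disch := norm_num)
    simpa using this.tendsto.mono_left nhdsWithin_le_nhds
  have hbounds : ∀ᶠ μ in nhdsWithin 0 (Ioi 0), c μ / (2 * μ) ∈ Icc (1 / (1 + 2 * μ)) 1 := by
    filter_upwards [self_mem_nhdsWithin] with μ (hμ : 0 < μ)
    exact div_mem_Icc_of_one_add_mul_log_one_add_eq (by positivity) (hc μ hμ).1.le (key μ hμ)
  exact tendsto_of_tendsto_of_tendsto_of_le_of_le' hlower tendsto_const_nhds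
    (hbounds.mono fun _ h => h.1) (hbounds.mono fun _ h => h.2)
end

section
/- For X uniform on [0, ω] with mean μ = ω/2, the unique positive solution c* of (1+c)log(1+c) = ω satisfies lim_{μ→∞} c*·log(μ)/(2μ) = 1. -/
/-!
Put `y = 1 + c μ`, so that `y log y = 2μ`. Since `y log y ≤ y²`, `y → ∞`. Taking logarithms,
`log μ = log y + log log y - log 2 = (1 + o(1)) log y`, hence
`c μ log μ / (2μ) = ((y - 1) / y) · (log μ / log y) → 1`.
-/

open Filter Real Topology

lemma mul_log_le_sq {y : ℝ} (hy : 0 ≤ y) : y * log y ≤ y ^ 2 := by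
  rcases hy.eq_or_lt with rfl | hy
  · simp
  · nlinarith [log_le_sub_one_of_pos hy]

lemma tendsto_atTop_of_mul_log_eq {α : Type*} {l : Filter α} {f g : α → ℝ}
    (hg : Tendsto g l atTop) (hf : ∀ᶠ x in l, 0 ≤ f x ∧ f x * log (f x) = g x) :
    Tendsto f l atTop := by
  refine tendsto_atTop_mono' l ?_ (tendsto_sqrt_atTop.comp hg)
  filter_upwards [hf] with x ⟨hf0, hfg⟩
  calc √(g x) ≤ √(f x ^ 2) := sqrt_le_sqrt (hfg ▸ mul_log_le_sq hf0)
    _ = f x := sqrt_sq hf0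

lemma log_eq_of_mul_log_eq {y a μ : ℝ} (hy : 1 < y) (ha : 0 < a) (hμ : 0 < μ)
    (h : y * log y = a * μ) : log μ = log y + log (log y) - log a := by
  have hlog : log (a * μ) = log y + log (log y) := by
    rw [← h, log_mul (by linarith) (log_pos hy).ne']
  rw [log_mul ha.ne' hμ.ne'] at hlog
  linarith

lemma tendsto_sub_one_div_self_atTop : Tendsto (fun y : ℝ => (y - 1) / y) atTop (𝓝 1) := by
  have h : Tendsto (fun y : ℝ => 1 - y⁻¹) atTop (𝓝 (1 - 0)) :=
    tendsto_const_nhds.sub tendsto_inv_atTop_zero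
  rw [sub_zero] at h
  refine h.congr' ?_
  filter_upwards [eventually_ne_atTop 0] with y hy
  field_simp

lemma tendsto_log_add_log_log_sub_div_log (a : ℝ) :
    Tendsto (fun y => (log y + log (log y) - a) / log y) atTop (𝓝 1) := by
  have hloglog : Tendsto (fun y => log (log y) / log y) atTop (𝓝 0) :=
    isLittleO_log_id_atTop.tendsto_div_nhds_zero.comp tendsto_log_atTop
  have hinv : Tendsto (fun y => a * (log y)⁻¹) atTop (𝓝 (a * 0)) :=
    (tendsto_inv_atTop_zero.comp tendsto_log_atTop).const_mul a
  have h := (tendsto_const_nhds (x := (1 : ℝ))).add hloglog |>.sub hinv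
  rw [mul_zero, add_zero, sub_zero] at h
  refine h.congr' ?_
  filter_upwards [tendsto_log_atTop.eventually_ne_atTop 0] with y hy
  field_simp

/-- For `X` uniform on `[0, ω]` with mean `μ = ω/2`, the unique positive solution `c*`
of `(1+c)log(1+c) = ω` satisfies `c* ∼ 2μ/log μ` as `μ → ∞`. -/
theorem stmt15 (c : ℝ → ℝ)
    (hc : ∀ μ > (0:ℝ), 0 < c μ ∧ (1 + c μ) * Real.log (1 + c μ) = 2*μ) :
    Filter.Tendsto (fun μ => c μ * Real.log μ / (2*μ)) Filter.atTop (nhds 1) := by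
  have hy : Tendsto (fun μ => 1 + c μ) atTop atTop := by
    refine tendsto_atTop_of_mul_log_eq (tendsto_id.const_mul_atTop two_pos) ?_
    filter_upwards [eventually_gt_atTop 0] with μ hμ
    exact ⟨by linarith [(hc μ hμ).1], (hc μ hμ).2⟩
  have hlim := (tendsto_sub_one_div_self_atTop.mul
    (tendsto_log_add_log_log_sub_div_log (log 2))).comp hy
  rw [one_mul] at hlim
  refine hlim.congr' ?_
  filter_upwards [eventually_gt_atTop 0] with μ hμ
  obtain ⟨hcμ, hμeq⟩ := hc μ hμ
  have hy1 : 1 < 1 + c μ := by linarith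
  have hlogy : 0 < log (1 + c μ) := log_pos hy1
  simp only [Function.comp_apply, log_eq_of_mul_log_eq hy1 two_pos hμ hμeq, ← hμeq]
  field_simp
  ring
end

section
/- For X exponential with rate η and mean μ = 1/η, the threshold c* defined by (1+c*)∫₀^{c*} η e^{-ηx}/(1+x) dx = 1 satisfies lim_{μ↓0} c*/(−μ log μ) = 1. -/
/-!
Write `e = exp (-c/μ)` for the tail of the exponential law at the threshold `c = c*`. Bounding
`1/(1+x)` between `1 - x` and `1` gives `1 - μ - e ≤ ∫₀^c η e^{-ηx}/(1+x) dx ≤ 1 - e`, so the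
defining equation forces `c/8 ≤ e ≤ c` once `μ` is small. Taking logarithms,
`-μ log μ - μ log(-log μ + log 8) ≤ c ≤ -μ log μ + μ log 8`, and both bounds are
`-μ log μ (1 + o(1))`.
-/

open Real Filter Set Topology Asymptotics

section ExponentialDensity

variable {μ c : ℝ}

lemma hasDerivAt_neg_exp_neg_div (μ x : ℝ) :
    HasDerivAt (fun y => -exp (-y / μ)) (1 / μ * exp (-x / μ)) x :=
  ((hasDerivAt_neg x).div_const μ).exp.neg.congr_deriv (by ring)

lemma hasDerivAt_add_sub_one_mul_exp_neg_div (hμ : μ ≠ 0) (x : ℝ) :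
    HasDerivAt (fun y => (y + μ - 1) * exp (-y / μ)) (1 / μ * exp (-x / μ) * (1 - x)) x := by
  have h := (((hasDerivAt_id' x).add_const μ).sub_const 1).mul
    ((hasDerivAt_neg x).div_const μ).exp
  exact h.congr_deriv (by field_simp; ring)

lemma integral_exp_density (μ c : ℝ) :
    ∫ x in (0:ℝ)..c, 1 / μ * exp (-x / μ) = 1 - exp (-c / μ) := by
  rw [intervalIntegral.integral_eq_sub_of_hasDerivAt (fun x _ => hasDerivAt_neg_exp_neg_div μ x)
    ((by fun_prop : Continuous _).intervalIntegrable _ _)]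
  simp only [neg_zero, zero_div, exp_zero, sub_neg_eq_add]
  ring

lemma integral_exp_density_mul_one_sub (hμ : μ ≠ 0) (c : ℝ) :
    ∫ x in (0:ℝ)..c, 1 / μ * exp (-x / μ) * (1 - x) = (c + μ - 1) * exp (-c / μ) - (μ - 1) := by
  rw [intervalIntegral.integral_eq_sub_of_hasDerivAt
    (fun x _ => hasDerivAt_add_sub_one_mul_exp_neg_div hμ x)
    ((by fun_prop : Continuous _).intervalIntegrable _ _)]
  simp only [zero_add, neg_zero, zero_div, exp_zero, mul_one]

lemma intervalIntegrable_exp_density_div_one_add (hc : 0 ≤ c) :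
    IntervalIntegrable (fun x => 1 / μ * exp (-x / μ) / (1 + x)) MeasureTheory.volume 0 c := by
  refine ContinuousOn.intervalIntegrable fun x hx => ?_
  rw [uIcc_of_le hc] at hx
  have : 1 + x ≠ 0 := by linarith [hx.1]
  fun_prop (disch := assumption)

lemma integral_exp_density_div_one_add_le (hμ : 0 ≤ μ) (hc : 0 ≤ c) :
    ∫ x in (0:ℝ)..c, 1 / μ * exp (-x / μ) / (1 + x) ≤ 1 - exp (-c / μ) := by
  rw [← integral_exp_density]
  refine intervalIntegral.integral_mono_on hc (intervalIntegrable_exp_density_div_one_add hc)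
    ((by fun_prop : Continuous _).intervalIntegrable _ _) fun x hx => ?_
  exact div_le_self (by positivity) (by linarith [hx.1])

lemma one_sub_sub_exp_le_integral_exp_density_div_one_add (hμ : 0 < μ) (hc : 0 ≤ c) :
    1 - μ - exp (-c / μ) ≤ ∫ x in (0:ℝ)..c, 1 / μ * exp (-x / μ) / (1 + x) := by
  have hmono : ∫ x in (0:ℝ)..c, 1 / μ * exp (-x / μ) * (1 - x)
      ≤ ∫ x in (0:ℝ)..c, 1 / μ * exp (-x / μ) / (1 + x) := by
    refine intervalIntegral.integral_mono_on hc
      ((by fun_prop : Continuous _).intervalIntegrable _ _)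
      (intervalIntegrable_exp_density_div_one_add hc) fun x hx => ?_
    have hx1 : 0 < 1 + x := by linarith [hx.1]
    rw [le_div_iff₀ hx1]
    have : 0 ≤ 1 / μ * exp (-x / μ) := by positivity
    nlinarith [mul_nonneg this (sq_nonneg x)]
  rw [integral_exp_density_mul_one_sub hμ.ne'] at hmono
  nlinarith [exp_pos (-c / μ)]

end ExponentialDensity

lemma exp_neg_one_div_le {μ : ℝ} (hμ : 0 < μ) : exp (-1 / μ) ≤ μ := by
  rw [neg_div, exp_neg, inv_le_comm₀ (exp_pos _) hμ, ← one_div]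
  linarith [add_one_le_exp (1 / μ)]

lemma exp_two_lt_nine : exp 2 < 9 := by
  have h : exp 2 = exp 1 ^ 2 := by rw [← exp_nat_mul]; norm_num
  rw [h]
  nlinarith [exp_one_lt_three, exp_pos 1]

lemma threshold_exp_bounds {μ c : ℝ} (hμ : 0 < μ) (hμ1 : μ < 1 / 100) (hc : 0 < c)
    (heq : (1 + c) * (∫ x in (0:ℝ)..c, 1 / μ * exp (-x / μ) / (1 + x)) = 1) :
    μ ≤ c ∧ c / 8 ≤ exp (-c / μ) ∧ exp (-c / μ) ≤ c := by
  have hA : 1 ≤ (1 + c) * (1 - exp (-c / μ)) := heq.symm.trans_le <|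
    mul_le_mul_of_nonneg_left (integral_exp_density_div_one_add_le hμ.le hc.le) (by positivity)
  have hB : (1 + c) * (1 - μ - exp (-c / μ)) ≤ 1 := (mul_le_mul_of_nonneg_left
    (one_sub_sub_exp_le_integral_exp_density_div_one_add hμ hc.le) (by positivity)).trans_eq heq
  set e := exp (-c / μ)
  have he_pos : 0 < e := exp_pos _
  have he_le : e ≤ c := by nlinarith
  have hc1 : c < 1 := by
    by_contra! h1
    have : e ≤ μ :=
      (exp_le_exp.2 (div_le_div_of_nonneg_right (neg_le_neg h1) hμ.le)).trans
        (exp_neg_one_div_le hμ)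
    nlinarith
  have hc2 : 2 * μ < c := by
    by_contra! h2
    have : exp (-2) ≤ e := exp_le_exp.2 (by rw [le_div_iff₀ hμ]; linarith)
    have : 1 / 9 < exp (-2) := by
      rw [exp_neg, one_div]; exact inv_strictAnti₀ (exp_pos 2) exp_two_lt_nine
    linarith
  refine ⟨by linarith, ?_, he_le⟩
  -- `hB` gives `(1 + c) e ≥ c - μ (1 + c) ≥ c / 4`, and `1 + c < 2`.
  nlinarith [mul_pos he_pos hc]

lemma bounds_of_div_le_exp_neg_div_le {μ c K : ℝ} (hμ : 0 < μ) (hμc : μ ≤ c) (hK : 0 < K)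
    (hlo : c / K ≤ exp (-c / μ)) (hhi : exp (-c / μ) ≤ c) :
    μ * (-log μ - log (-log μ + log K)) ≤ c ∧ c ≤ μ * (-log μ + log K) := by
  have hc : 0 < c := hμ.trans_le hμc
  have hupper : c ≤ μ * (-log μ + log K) := by
    have h1 : log c - log K ≤ -c / μ := by
      rw [← log_div hc.ne' hK.ne', ← log_exp (-c / μ)]
      exact log_le_log (by positivity) hlo
    rw [le_div_iff₀ hμ] at h1
    nlinarith [log_le_log hμ hμc]
  refine ⟨?_, hupper⟩
  have hL : 0 < -log μ + log K := pos_of_mul_pos_right (hc.trans_le hupper) hμ.le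
  have h1 : -c / μ ≤ log μ + log (-log μ + log K) := by
    rw [← log_mul hμ.ne' hL.ne', ← log_exp (-c / μ)]
    exact log_le_log (exp_pos _) (hhi.trans hupper)
  rw [div_le_iff₀ hμ] at h1
  nlinarith

lemma tendsto_log_add_const_div_atTop (K : ℝ) :
    Tendsto (fun L => log (L + K) / L) atTop (𝓝 0) := by
  have hlog : (fun L => log (L + K)) =o[atTop] fun L => L + K :=
    isLittleO_log_id_atTop.comp_tendsto (tendsto_atTop_add_const_right _ K tendsto_id)
  have hlin : (fun L : ℝ => L + K) =O[atTop] id :=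
    (isBigO_refl id atTop).add (isLittleO_const_id_atTop K).isBigO
  exact (hlog.trans_isBigO hlin).tendsto_div_nhds_zero

lemma tendsto_div_neg_mul_log_of_bounds {f : ℝ → ℝ} {K : ℝ}
    (h : ∀ᶠ μ in 𝓝[>] 0,
      μ * (-log μ - log (-log μ + K)) ≤ f μ ∧ f μ ≤ μ * (-log μ + K)) :
    Tendsto (fun μ => f μ / (-(μ * log μ))) (𝓝[>] 0) (𝓝 1) := by
  have hL : Tendsto (fun μ : ℝ => -log μ) (𝓝[>] 0) atTop :=
    tendsto_neg_atBot_atTop.comp tendsto_log_nhdsGT_zero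
  have hlower : Tendsto (fun L : ℝ => 1 - log (L + K) / L) atTop (𝓝 1) := by
    simpa using tendsto_const_nhds.sub (tendsto_log_add_const_div_atTop K)
  have hupper : Tendsto (fun L : ℝ => 1 + K / L) atTop (𝓝 1) := by
    simpa using tendsto_const_nhds.add ((tendsto_const_nhds (x := K)).div_atTop tendsto_id)
  have hsmall : ∀ᶠ μ in 𝓝[>] (0 : ℝ), 0 < μ * -log μ ∧ log μ ≠ 0 := by
    filter_upwards [Ioo_mem_nhdsGT zero_lt_one] with μ ⟨h0, h1⟩
    exact ⟨mul_pos h0 (neg_pos.2 (log_neg h0 h1)), (log_neg h0 h1).ne⟩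
  refine tendsto_of_tendsto_of_tendsto_of_le_of_le' (hlower.comp hL) (hupper.comp hL) ?_ ?_
  · filter_upwards [h, hsmall] with μ hf ⟨hpos, hlog⟩
    rw [← mul_neg, le_div_iff₀ hpos]
    calc (1 - log (-log μ + K) / -log μ) * (μ * -log μ)
        = μ * (-log μ - log (-log μ + K)) := by field_simp; ring
      _ ≤ f μ := hf.1
  · filter_upwards [h, hsmall] with μ hf ⟨hpos, hlog⟩
    rw [← mul_neg, div_le_iff₀ hpos]
    calc f μ ≤ μ * (-log μ + K) := hf.2
      _ = (1 + K / -log μ) * (μ * -log μ) := by field_simp; ring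

/-- For `X` exponential with mean `μ`, the threshold `c*` defined by
`(1+c*)∫₀^{c*} η e^{-ηx}/(1+x) dx = 1` satisfies `c* ∼ −μ log μ` as `μ ↓ 0`. -/
theorem stmt16 (c : ℝ → ℝ)
    (hc : ∀ μ > (0:ℝ), 0 < c μ ∧
      (1 + c μ) * (∫ x in (0:ℝ)..(c μ), (1/μ) * Real.exp (-x/μ) / (1+x)) = 1) :
    Filter.Tendsto (fun μ => c μ / (-(μ * Real.log μ))) (nhdsWithin 0 (Set.Ioi 0))
      (nhds 1) := by
  refine tendsto_div_neg_mul_log_of_bounds (K := log 8) ?_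
  filter_upwards [Ioo_mem_nhdsGT (by norm_num : (0:ℝ) < 1 / 100)] with μ ⟨hμ, hμ1⟩
  obtain ⟨hcpos, heq⟩ := hc μ hμ
  obtain ⟨hμc, hlo, hhi⟩ := threshold_exp_bounds hμ hμ1 hcpos heq
  exact bounds_of_div_le_exp_neg_div_le hμ hμc (by norm_num) hlo hhi
end

section
/- For X Rayleigh with density f_X(x) = (x/θ)e^{-x²/(2θ)} on x ≥ 0 and mean μ = √(πθ/2), the threshold c* defined by (1+c*)∫₀^{c*} f_X(x)/(1+x) dx = 1 satisfies c* ∼ a*·μ as μ → ∞, where a* is the unique positive solution of (πa/2)∫₀^a e^{-πy²/4} dy = 1. -/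
/-!
Substituting `x = μ y` turns the equation for the threshold at `c = b μ` into
`∫₀^b (π/2) · y(1 + bμ)/(1 + μy) · e^{-πy²/4} dy = 1`. The weight `y(1 + bμ)/(1 + μy)`
stays in `[0, b]` and tends to `b` as `μ → ∞`, so by dominated convergence the left-hand side
tends to `(πb/2) ∫₀^b e^{-πy²/4} dy`. This limit is strictly increasing in `b` and equals `1` at `b = a`,
while the left-hand side of the threshold equation is increasing in `c`. Hence for `b₁ < a < b₂`
we eventually have `b₁ μ < c μ < b₂ μ`.
-/

open Real Filter MeasureTheory intervalIntegral Set
open scoped Topology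

noncomputable section

def rayleighPDF (θ x : ℝ) : ℝ := x / θ * exp (-x ^ 2 / (2 * θ))

/-- Mean `μ` corresponds to the scale `θ = 2μ²/π`. -/
def thresholdFun (μ t : ℝ) : ℝ :=
  (1 + t) * ∫ x in (0:ℝ)..t, rayleighPDF (2 * μ ^ 2 / π) x / (1 + x)

def limitFun (b : ℝ) : ℝ := π * b / 2 * ∫ y in (0:ℝ)..b, exp (-π * y ^ 2 / 4)

end

theorem monotoneOn_integral_of_nonneg {f : ℝ → ℝ} (hf : ContinuousOn f (Ici 0))
    (hf₀ : ∀ x ∈ Ici (0:ℝ), 0 ≤ f x) :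
    MonotoneOn (fun t => ∫ x in (0:ℝ)..t, f x) (Ici 0) := by
  intro s hs t ht hst
  refine integral_mono_interval le_rfl hs hst ?_ ?_
  · exact (ae_restrict_mem measurableSet_Ioc).mono fun x hx => hf₀ x (le_of_lt hx.1)
  · exact (hf.mono (uIcc_of_le (hs.trans hst) ▸ Icc_subset_Ici_self)).intervalIntegrable

theorem monotoneOn_thresholdFun (μ : ℝ) : MonotoneOn (thresholdFun μ) (Ici 0) := by
  have hcont : ContinuousOn (fun x => rayleighPDF (2 * μ ^ 2 / π) x / (1 + x)) (Ici 0) :=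
    ContinuousOn.div (by unfold rayleighPDF; fun_prop) (by fun_prop)
      fun x hx => by linarith [mem_Ici.1 hx]
  have hnonneg : ∀ x ∈ Ici (0:ℝ), 0 ≤ rayleighPDF (2 * μ ^ 2 / π) x / (1 + x) := by
    intro x hx
    have hx : 0 ≤ x := hx
    unfold rayleighPDF
    positivity
  refine MonotoneOn.mul (fun s _ t _ hst => by linarith) (monotoneOn_integral_of_nonneg hcont
    hnonneg) (fun t ht => by linarith [mem_Ici.1 ht]) fun t ht => ?_
  exact monotoneOn_integral_of_nonneg hcont hnonneg self_mem_Ici ht ht |>.trans_eq' (by simp)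

theorem strictMonoOn_limitFun : StrictMonoOn limitFun (Ici 0) := by
  have hmono := monotoneOn_integral_of_nonneg (f := fun y => exp (-π * y ^ 2 / 4))
    (by fun_prop) fun y _ => (exp_pos _).le
  intro s hs t ht hst
  have ht₀ : 0 < t := lt_of_le_of_lt hs hst
  have hpos : 0 < ∫ y in (0:ℝ)..t, exp (-π * y ^ 2 / 4) :=
    intervalIntegral_pos_of_pos ((by fun_prop : Continuous _).intervalIntegrable _ _)
      (fun _ => exp_pos _) ht₀
  have hs₀ : (0:ℝ) ≤ π * s / 2 := by have := mem_Ici.1 hs; positivity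
  calc limitFun s ≤ π * s / 2 * ∫ y in (0:ℝ)..t, exp (-π * y ^ 2 / 4) :=
        mul_le_mul_of_nonneg_left (hmono hs ht hst.le) hs₀
    _ < limitFun t := by unfold limitFun; gcongr

theorem div_one_add_mul_mem_Icc {b μ y : ℝ} (hμ : 0 ≤ μ) (hy : y ∈ Icc 0 b) :
    y * (1 + b * μ) / (1 + μ * y) ∈ Icc 0 b := by
  obtain ⟨hy₀, hyb⟩ := hy
  have hden : 0 < 1 + μ * y := by positivity
  refine ⟨by have := hy₀.trans hyb; positivity, (div_le_iff₀ hden).2 ?_⟩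
  nlinarith [mul_nonneg hμ hy₀]

theorem tendsto_div_one_add_mul {b y : ℝ} (hy : 0 < y) :
    Tendsto (fun μ => y * (1 + b * μ) / (1 + μ * y)) atTop (𝓝 b) := by
  have hden : Tendsto (fun μ => 1 + μ * y) atTop atTop :=
    tendsto_atTop_add_const_left _ _ (tendsto_id.atTop_mul_const hy)
  have hlim := (tendsto_const_nhds (x := y - b)).div_atTop hden |>.const_add b
  rw [add_zero] at hlim
  refine hlim.congr' ((eventually_ge_atTop 0).mono fun μ hμ => ?_)
  have : 1 + μ * y ≠ 0 := by positivity
  field_simp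
  ring

theorem thresholdFun_mul_eq (b : ℝ) {μ : ℝ} (hμ : 0 < μ) :
    thresholdFun μ (b * μ) =
      ∫ y in (0:ℝ)..b, π / 2 * (y * (1 + b * μ) / (1 + μ * y)) * exp (-π * y ^ 2 / 4) := by
  rw [thresholdFun, mul_comm b μ, ← mul_zero μ, ← mul_integral_comp_mul_left, mul_zero,
    ← mul_assoc, ← intervalIntegral.integral_const_mul]
  refine integral_congr fun y _ => ?_
  have hexp : -(μ * y) ^ 2 / (2 * (2 * μ ^ 2 / π)) = -π * y ^ 2 / 4 := by
    field_simp; ring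
  simp only [rayleighPDF, hexp]
  field_simp

theorem tendsto_thresholdFun_mul {b : ℝ} (hb : 0 < b) :
    Tendsto (fun μ => thresholdFun μ (b * μ)) atTop (𝓝 (limitFun b)) := by
  have hIoc : uIoc (0:ℝ) b = Ioc 0 b := uIoc_of_le hb.le
  have hDCT : Tendsto (fun μ => ∫ y in (0:ℝ)..b,
      π / 2 * (y * (1 + b * μ) / (1 + μ * y)) * exp (-π * y ^ 2 / 4)) atTop
      (𝓝 (∫ y in (0:ℝ)..b, π / 2 * b * exp (-π * y ^ 2 / 4))) := by
    refine tendsto_integral_filter_of_dominated_convergence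
      (fun y => π / 2 * b * exp (-π * y ^ 2 / 4)) ?_ ?_
      ((by fun_prop : Continuous _).intervalIntegrable _ _) ?_
    · filter_upwards [eventually_ge_atTop 0] with μ hμ
      refine ContinuousOn.aestronglyMeasurable ?_ measurableSet_uIoc
      rw [hIoc]
      refine ContinuousOn.mul (ContinuousOn.mul continuousOn_const
        (ContinuousOn.div (by fun_prop) (by fun_prop) fun y hy => ?_)) (by fun_prop)
      have : 0 < y := hy.1
      positivity
    · filter_upwards [eventually_ge_atTop 0] with μ hμ
      refine ae_of_all _ fun y hy => ?_
      rw [hIoc] at hy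
      obtain ⟨hq₀, hqb⟩ := div_one_add_mul_mem_Icc hμ (Ioc_subset_Icc_self hy)
      rw [norm_of_nonneg (by positivity)]
      gcongr
    · refine ae_of_all _ fun y hy => ?_
      rw [hIoc] at hy
      exact ((tendsto_div_one_add_mul hy.1).const_mul _).mul_const _
  rw [intervalIntegral.integral_const_mul] at hDCT
  convert hDCT.congr' ((eventually_gt_atTop 0).mono fun μ hμ => (thresholdFun_mul_eq b hμ).symm)
    using 2
  unfold limitFun
  ring

theorem tendsto_div_atTop_of_eventually_between {c : ℝ → ℝ} {a : ℝ}
    (hlow : ∀ b < a, ∀ᶠ μ in atTop, b * μ < c μ) (hhigh : ∀ b > a, ∀ᶠ μ in atTop, c μ < b * μ) :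
    Tendsto (fun μ => c μ / μ) atTop (𝓝 a) := by
  refine tendsto_order.2 ⟨fun b hb => ?_, fun b hb => ?_⟩
  · filter_upwards [hlow b hb, eventually_gt_atTop 0] with μ h hμ
    exact (lt_div_iff₀ hμ).2 h
  · filter_upwards [hhigh b hb, eventually_gt_atTop 0] with μ h hμ
    exact (div_lt_iff₀ hμ).2 h

/-- For `X` Rayleigh with mean `μ = √(πθ/2)`, the threshold `c*` defined by
`(1+c*)∫₀^{c*} f_X(x)/(1+x) dx = 1` satisfies `c* ∼ a*μ` as `μ → ∞`, where `a*` is the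
unique positive solution of `(πa/2)∫₀^a e^{-πy²/4} dy = 1`. -/
theorem stmt17 (a : ℝ) (ha : 0 < a)
    (ha' : Real.pi * a / 2 * (∫ y in (0:ℝ)..a, Real.exp (-Real.pi * y^2 / 4)) = 1)
    (c : ℝ → ℝ)
    (hc : ∀ μ > (0:ℝ), 0 < c μ ∧
      (1 + c μ) * (∫ x in (0:ℝ)..(c μ),
        (x / (2*μ^2/Real.pi)) * Real.exp (-x^2 / (2*(2*μ^2/Real.pi))) / (1+x)) = 1) :
    Filter.Tendsto (fun μ => c μ / (a * μ)) Filter.atTop (nhds 1) := by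
  have hthr : ∀ μ > (0:ℝ), 0 < c μ ∧ thresholdFun μ (c μ) = 1 := hc
  have hlim : limitFun a = 1 := ha'
  have hratio : Tendsto (fun μ => c μ / μ) atTop (𝓝 a) := by
    refine tendsto_div_atTop_of_eventually_between (fun b hb => ?_) (fun b hb => ?_)
    · rcases le_or_gt b 0 with hb₀ | hb₀
      · filter_upwards [eventually_gt_atTop 0] with μ hμ
        nlinarith [(hthr μ hμ).1]
      have hLb : limitFun b < 1 := hlim ▸ strictMonoOn_limitFun hb₀.le ha.le hb
      filter_upwards [(tendsto_thresholdFun_mul hb₀).eventually_lt_const hLb,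
        eventually_gt_atTop 0] with μ h hμ
      exact (monotoneOn_thresholdFun μ).reflect_lt (by positivity : (0:ℝ) ≤ b * μ)
        (hthr μ hμ).1.le (h.trans_eq (hthr μ hμ).2.symm)
    · have hb₀ : 0 < b := ha.trans hb
      have hLb : 1 < limitFun b := hlim ▸ strictMonoOn_limitFun ha.le hb₀.le hb
      filter_upwards [(tendsto_thresholdFun_mul hb₀).eventually_const_lt hLb,
        eventually_gt_atTop 0] with μ h hμ
      exact (monotoneOn_thresholdFun μ).reflect_lt (hthr μ hμ).1.le
        (by positivity : (0:ℝ) ≤ b * μ) ((hthr μ hμ).2.trans_lt h)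
  have hdiv := hratio.div_const a
  rw [div_self ha.ne'] at hdiv
  exact hdiv.congr fun μ => by rw [div_div, mul_comm μ]
end

section
/- For X Poisson with mean μ and any a > 0, lim_{μ→∞} (1+aμ)·Σ_{k=⌈μ−μ^{2/3}⌉}^{⌊μ+μ^{2/3}⌋} e^{-μ}μ^k/((1+k)·k!) = a. -/
/-!
On the window `|k - μ| ≤ w` we have `1 + k = μ (1 + o(1))` as soon as `w = o(μ)`, so
`μ · ∑_{window} P(X = k) / (1 + k)` is squeezed between `P(|X - μ| ≤ w) / (1 + o(1))` and
`1 / (1 - o(1))`. Chebyshev's inequality (`Var X = μ`) gives `P(|X - μ| > w) ≤ μ / w² → 0`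
when `√μ = o(w)`. Both conditions hold for `w = μ^{2/3}`, and `(1 + aμ) / μ → a`.
-/

open Filter Topology Real Finset Nat

/-- `ProbabilityTheory.poissonPMFReal` with a real mean. -/
noncomputable def poissonWeight (x : ℝ) (k : ℕ) : ℝ := exp (-x) * x ^ k / k !

lemma poissonWeight_nonneg {x : ℝ} (hx : 0 ≤ x) (k : ℕ) : 0 ≤ poissonWeight x k := by
  unfold poissonWeight; positivity

lemma hasSum_poissonWeight (x : ℝ) : HasSum (poissonWeight x) 1 := by
  have h := (NormedSpace.expSeries_div_hasSum_exp x).mul_left (exp (-x))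
  rw [← Real.exp_eq_exp_ℝ, ← Real.exp_add, neg_add_cancel, Real.exp_zero] at h
  exact h.congr_fun fun k ↦ by rw [poissonWeight, mul_div_assoc]

lemma hasSum_descFactorial_mul_poissonWeight (x : ℝ) (j : ℕ) :
    HasSum (fun k ↦ (k.descFactorial j : ℝ) * poissonWeight x k) (x ^ j) := by
  rw [← hasSum_nat_add_iff' j]
  have hlow : ∑ i ∈ range j, (i.descFactorial j : ℝ) * poissonWeight x i = 0 :=
    sum_eq_zero fun i hi ↦ by
      rw [Nat.descFactorial_eq_zero_iff_lt.mpr (mem_range.mp hi), Nat.cast_zero, zero_mul]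
  rw [hlow, sub_zero, ← mul_one (x ^ j)]
  refine ((hasSum_poissonWeight x).mul_left (x ^ j)).congr_fun fun n ↦ ?_
  have hfac : ((n + j) ! : ℝ) = n ! * (n + j).descFactorial j := by
    rw [← Nat.factorial_mul_descFactorial (Nat.le_add_left j n), Nat.add_sub_cancel]
    push_cast; ring
  have : ((n + j).descFactorial j : ℝ) ≠ 0 := by
    exact_mod_cast (Nat.descFactorial_pos.mpr (Nat.le_add_left j n)).ne'
  simp only [poissonWeight, hfac]
  field_simp
  ring

lemma hasSum_sub_sq_mul_poissonWeight (x : ℝ) :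
    HasSum (fun k : ℕ ↦ ((k : ℝ) - x) ^ 2 * poissonWeight x k) x := by
  have h2 := hasSum_descFactorial_mul_poissonWeight x 2
  have h1 := (hasSum_descFactorial_mul_poissonWeight x 1).mul_left (1 - 2 * x)
  have h0 := (hasSum_descFactorial_mul_poissonWeight x 0).mul_left (x ^ 2)
  convert (h2.add h1).add h0 using 1
  · funext k
    simp only [Nat.cast_descFactorial_two, Nat.descFactorial_one, Nat.descFactorial_zero]
    push_cast; ring
  · ring

lemma mem_Icc_ceil_floor_iff {x t : ℝ} (h : 0 ≤ x + t) (k : ℕ) :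
    k ∈ Icc ⌈x - t⌉₊ ⌊x + t⌋₊ ↔ |(k : ℝ) - x| ≤ t := by
  rw [mem_Icc, Nat.ceil_le, Nat.le_floor_iff h, abs_sub_le_iff]
  constructor <;> rintro ⟨h₁, h₂⟩ <;> constructor <;> linarith

section Bounds

variable {x t : ℝ} {s : Finset ℕ}

lemma one_sub_div_sq_le_sum_poissonWeight (hx : 0 ≤ x) (ht : 0 < t)
    (hs : ∀ k : ℕ, |(k : ℝ) - x| ≤ t → k ∈ s) :
    1 - x / t ^ 2 ≤ ∑ k ∈ s, poissonWeight x k := by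
  have hin : HasSum (fun k ↦ if k ∈ s then poissonWeight x k else 0)
      (∑ k ∈ s, poissonWeight x k) := by
    rw [← sum_congr rfl fun k (hk : k ∈ s) ↦ if_pos hk]
    exact hasSum_sum_of_ne_finset_zero fun k hk ↦ if_neg hk
  suffices 1 ≤ ∑ k ∈ s, poissonWeight x k + x / t ^ 2 by linarith
  refine hasSum_le (fun k ↦ ?_) (hasSum_poissonWeight x)
    (hin.add ((hasSum_sub_sq_mul_poissonWeight x).div_const (t ^ 2)))
  have hp := poissonWeight_nonneg hx k
  by_cases hk : k ∈ s
  · simp only [hk, if_true]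
    have : 0 ≤ ((k : ℝ) - x) ^ 2 * poissonWeight x k / t ^ 2 := by positivity
    linarith
  · have hfar : t ^ 2 ≤ ((k : ℝ) - x) ^ 2 := by
      rw [← sq_abs ((k : ℝ) - x)]
      exact pow_le_pow_left₀ ht.le (not_le.mp (mt (hs k) hk)).le 2
    rw [if_neg hk, zero_add, le_div_iff₀ (by positivity), mul_comm]
    exact mul_le_mul_of_nonneg_right hfar hp

lemma sum_poissonWeight_div_le (hx : 0 ≤ x) (hxt : 0 < 1 + x - t)
    (hs : ∀ k ∈ s, |(k : ℝ) - x| ≤ t) :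
    ∑ k ∈ s, poissonWeight x k / (1 + k) ≤ 1 / (1 + x - t) :=
  calc ∑ k ∈ s, poissonWeight x k / (1 + k)
      ≤ ∑ k ∈ s, poissonWeight x k / (1 + x - t) := by
        refine sum_le_sum fun k hk ↦ div_le_div_of_nonneg_left (poissonWeight_nonneg hx k) hxt ?_
        linarith [(abs_sub_le_iff.mp (hs k hk)).2]
    _ = (∑ k ∈ s, poissonWeight x k) / (1 + x - t) := (sum_div ..).symm
    _ ≤ 1 / (1 + x - t) := by
        gcongr
        exact sum_le_hasSum s (fun k _ ↦ poissonWeight_nonneg hx k) (hasSum_poissonWeight x)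

lemma div_le_sum_poissonWeight_div (hx : 0 ≤ x) (ht : 0 < t)
    (hs : ∀ k : ℕ, k ∈ s ↔ |(k : ℝ) - x| ≤ t) :
    (1 - x / t ^ 2) / (1 + x + t) ≤ ∑ k ∈ s, poissonWeight x k / (1 + k) :=
  calc (1 - x / t ^ 2) / (1 + x + t)
      ≤ (∑ k ∈ s, poissonWeight x k) / (1 + x + t) := by
        gcongr
        exact one_sub_div_sq_le_sum_poissonWeight hx ht fun k ↦ (hs k).mpr
    _ = ∑ k ∈ s, poissonWeight x k / (1 + x + t) := sum_div ..
    _ ≤ ∑ k ∈ s, poissonWeight x k / (1 + k) := by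
        refine sum_le_sum fun k hk ↦ div_le_div_of_nonneg_left (poissonWeight_nonneg hx k)
          (by positivity) ?_
        linarith [(abs_sub_le_iff.mp ((hs k).mp hk)).1]

end Bounds

lemma tendsto_mul_sum_Icc_poissonWeight_div {w : ℝ → ℝ} (hw₀ : ∀ᶠ x in atTop, 0 < w x)
    (hw : Tendsto (fun x ↦ w x / x) atTop (𝓝 0))
    (hw₂ : Tendsto (fun x ↦ x / w x ^ 2) atTop (𝓝 0)) :
    Tendsto (fun x ↦ x * ∑ k ∈ Icc ⌈x - w x⌉₊ ⌊x + w x⌋₊, poissonWeight x k / (1 + k))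
      atTop (𝓝 1) := by
  have hupper : Tendsto (fun x ↦ 1 / (x⁻¹ + 1 - w x / x)) atTop (𝓝 1) := by
    simpa using ((tendsto_inv_atTop_zero.add_const 1).sub hw).inv₀ (by norm_num)
  have hlower : Tendsto (fun x ↦ (1 - x / w x ^ 2) / (x⁻¹ + 1 + w x / x)) atTop (𝓝 1) := by
    simpa [Pi.div_def] using (tendsto_const_nhds.sub hw₂).div
      ((tendsto_inv_atTop_zero.add_const 1).add hw) (by norm_num)
  refine tendsto_of_tendsto_of_tendsto_of_le_of_le' hlower hupper ?_ ?_ <;>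
  filter_upwards [eventually_gt_atTop 0, hw₀, hw.eventually (gt_mem_nhds zero_lt_one)]
    with x hx hwx hwx1
  · have hs := mem_Icc_ceil_floor_iff (by linarith : 0 ≤ x + w x)
    calc (1 - x / w x ^ 2) / (x⁻¹ + 1 + w x / x)
        = x * ((1 - x / w x ^ 2) / (1 + x + w x)) := by field_simp
      _ ≤ _ := mul_le_mul_of_nonneg_left (div_le_sum_poissonWeight_div hx.le hwx hs) hx.le
  · have hwx' : w x < x := (div_lt_one hx).mp hwx1
    have hs := mem_Icc_ceil_floor_iff (by linarith : 0 ≤ x + w x)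
    calc x * ∑ k ∈ Icc ⌈x - w x⌉₊ ⌊x + w x⌋₊, poissonWeight x k / (1 + k)
        ≤ x * (1 / (1 + x - w x)) := mul_le_mul_of_nonneg_left
          (sum_poissonWeight_div_le hx.le (by linarith) fun k ↦ (hs k).mp) hx.le
      _ = 1 / (x⁻¹ + 1 - w x / x) := by field_simp

theorem stmt18_general (a : ℝ) :
    Filter.Tendsto (fun μ : ℝ => (1 + a*μ) *
      ∑ k ∈ Finset.Icc ⌈μ - μ ^ ((2:ℝ)/3)⌉₊ ⌊μ + μ ^ ((2:ℝ)/3)⌋₊,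
        Real.exp (-μ) * μ^k / ((1+(k:ℝ)) * (Nat.factorial k)))
      Filter.atTop (nhds a) := by
  have hdecay : Tendsto (fun μ : ℝ ↦ μ ^ (-(1 : ℝ) / 3)) atTop (𝓝 0) := by
    simpa [neg_div] using tendsto_rpow_neg_atTop (by norm_num : (0 : ℝ) < 1 / 3)
  have hw₀ : ∀ᶠ μ : ℝ in atTop, 0 < μ ^ ((2 : ℝ) / 3) :=
    (eventually_gt_atTop 0).mono fun μ hμ ↦ rpow_pos_of_pos hμ _
  have hw : Tendsto (fun μ : ℝ ↦ μ ^ ((2 : ℝ) / 3) / μ) atTop (𝓝 0) := by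
    refine hdecay.congr' ?_
    filter_upwards [eventually_gt_atTop 0] with μ hμ
    rw [← rpow_sub_one hμ.ne']
    norm_num
  have hw₂ : Tendsto (fun μ : ℝ ↦ μ / (μ ^ ((2 : ℝ) / 3)) ^ 2) atTop (𝓝 0) := by
    refine hdecay.congr' ?_
    filter_upwards [eventually_gt_atTop 0] with μ hμ
    rw [← rpow_natCast, ← rpow_mul hμ.le, ← rpow_one_sub' hμ.le (by norm_num)]
    norm_num
  have hlim := (tendsto_inv_atTop_zero.add_const a).mul
    (tendsto_mul_sum_Icc_poissonWeight_div hw₀ hw hw₂)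
  rw [zero_add, mul_one] at hlim
  refine hlim.congr' ?_
  filter_upwards [eventually_gt_atTop 0] with μ hμ
  simp only [poissonWeight, div_mul_eq_div_div_swap]
  rw [← mul_assoc, add_mul, inv_mul_cancel₀ hμ.ne']

/-- For Poisson `X` with mean `μ` and any `a > 0`,
`lim_{μ→∞} (1+aμ)·Σ_{k=⌈μ−μ^{2/3}⌉}^{⌊μ+μ^{2/3}⌋} e^{-μ}μ^k/((1+k)k!) = a`. -/
theorem stmt18 (a : ℝ) (ha : 0 < a) :
    Filter.Tendsto (fun μ : ℝ => (1 + a*μ) *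
      ∑ k ∈ Finset.Icc ⌈μ - μ ^ ((2:ℝ)/3)⌉₊ ⌊μ + μ ^ ((2:ℝ)/3)⌋₊,
        Real.exp (-μ) * μ^k / ((1+(k:ℝ)) * (Nat.factorial k)))
      Filter.atTop (nhds a) :=
  stmt18_general a
end

section
/- For X Poisson with mean μ, lim_{μ→∞} μ·Σ_{k=0}^{⌈μ−μ^{2/3}⌉−1} e^{-μ}μ^k/((1+k)·k!) = 0. -/
open Filter Finset Real Nat Topology

/-!
Chernoff bound for the lower tail: weighting the `k`-th Poisson term by `e^{t(m-k)} ≥ 1`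
bounds `P(X ≤ m)` by `exp (t m - μ + μ e^{-t})`. With `e^{-t} ≤ 1 - t + t²/2` and `t = a / μ`
this gives `P(X < μ - a) ≤ exp (-a² / (2μ))`. For `a = μ^{2/3}` the bound is `exp (-μ^{1/3} / 2)`,
which beats the factor `μ`; the weights `1 / (1 + k)` only help.
-/

lemma one_le_exp_mul_one_sub_add_sq_div_two {t : ℝ} (ht : 0 ≤ t) :
    1 ≤ exp t * (1 - t + t ^ 2 / 2) := by
  have hderiv (x : ℝ) :
      HasDerivAt (fun x => exp x * (1 - x + x ^ 2 / 2)) (exp x * (x ^ 2 / 2)) x := by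
    have hp : HasDerivAt (fun x => 1 - x + x ^ 2 / 2) (x - 1) x :=
      (((hasDerivAt_id x).const_sub 1).add ((hasDerivAt_pow 2 x).div_const 2)).congr_deriv
        (by push_cast; ring)
    exact ((hasDerivAt_exp x).mul hp).congr_deriv (by ring)
  have hmono : Monotone fun x => exp x * (1 - x + x ^ 2 / 2) :=
    monotone_of_deriv_nonneg (fun x => (hderiv x).differentiableAt)
      fun x => (hderiv x).deriv ▸ by positivity
  simpa using hmono ht

lemma exp_neg_le_one_sub_add_sq_div_two {t : ℝ} (ht : 0 ≤ t) :
    exp (-t) ≤ 1 - t + t ^ 2 / 2 := by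
  rw [exp_neg, inv_le_iff_one_le_mul₀' (exp_pos t)]
  exact one_le_exp_mul_one_sub_add_sq_div_two ht

lemma poisson_lower_tail_le_chernoff {μ t m : ℝ} {N : ℕ} (hμ : 0 ≤ μ) (ht : 0 ≤ t)
    (hN : ∀ k < N, (k : ℝ) ≤ m) :
    ∑ k ∈ range N, exp (-μ) * μ ^ k / k ! ≤ exp (t * m - μ + μ * exp (-t)) := by
  calc ∑ k ∈ range N, exp (-μ) * μ ^ k / k !
      ≤ ∑ k ∈ range N, exp (t * (m - k)) * (exp (-μ) * μ ^ k / k !) := by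
        gcongr with k hk
        refine le_mul_of_one_le_left (by positivity) (one_le_exp ?_)
        have hkm := hN k (mem_range.1 hk)
        nlinarith
    _ = exp (t * m - μ) * ∑ k ∈ range N, (μ * exp (-t)) ^ k / k ! := by
        rw [mul_sum]
        refine sum_congr rfl fun k _ => ?_
        have hexp : exp (t * (m - k)) * exp (-μ) = exp (t * m - μ) * exp (-t) ^ k := by
          rw [← exp_nat_mul, ← exp_add, ← exp_add]
          ring_nf
        rw [mul_pow]
        linear_combination (μ ^ k / k !) * hexp
    _ ≤ exp (t * m - μ) * exp (μ * exp (-t)) := by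
        gcongr
        exact sum_le_exp_of_nonneg (by positivity) N
    _ = exp (t * m - μ + μ * exp (-t)) := (exp_add _ _).symm

lemma poisson_lower_tail_le_exp_neg_sq {μ a : ℝ} (hμ : 0 < μ) (ha : 0 ≤ a) :
    ∑ k ∈ range ⌈μ - a⌉₊, exp (-μ) * μ ^ k / k ! ≤ exp (-(a ^ 2 / (2 * μ))) := by
  have hN : ∀ k < ⌈μ - a⌉₊, (k : ℝ) ≤ μ - a := fun k hk => (Nat.lt_ceil.1 hk).le
  refine (poisson_lower_tail_le_chernoff hμ.le (div_nonneg ha hμ.le) hN).trans (exp_le_exp.2 ?_)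
  have hquad := mul_le_mul_of_nonneg_left
    (exp_neg_le_one_sub_add_sq_div_two (div_nonneg ha hμ.le)) hμ.le
  have hexponent : a / μ * (μ - a) - μ + μ * (1 - a / μ + (a / μ) ^ 2 / 2) = -(a ^ 2 / (2 * μ)) := by
    field_simp; ring
  linarith

lemma tendsto_mul_exp_neg_mul_rpow_atTop_nhds_zero {p b : ℝ} (hp : 0 < p) (hb : 0 < b) :
    Tendsto (fun x => x * exp (-b * x ^ p)) atTop (𝓝 0) := by
  refine ((tendsto_rpow_mul_exp_neg_mul_atTop_nhds_zero p⁻¹ b hb).comp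
    (tendsto_rpow_atTop hp)).congr' ?_
  filter_upwards [eventually_ge_atTop 0] with x hx
  simp [rpow_rpow_inv hx hp.ne']

/-- For Poisson `X` with mean `μ`,
`lim_{μ→∞} μ·Σ_{k=0}^{⌈μ−μ^{2/3}⌉−1} e^{-μ}μ^k/((1+k)k!) = 0`. -/
theorem stmt19 :
    Filter.Tendsto (fun μ : ℝ => μ *
      ∑ k ∈ Finset.range ⌈μ - μ ^ ((2:ℝ)/3)⌉₊,
        Real.exp (-μ) * μ^k / ((1+(k:ℝ)) * (Nat.factorial k)))
      Filter.atTop (nhds 0) := by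
  refine squeeze_zero' ?_ ?_ (tendsto_mul_exp_neg_mul_rpow_atTop_nhds_zero
    (p := 1 / 3) (b := 1 / 2) (by norm_num) (by norm_num))
  · filter_upwards [eventually_ge_atTop 0] with μ hμ
    positivity
  · filter_upwards [eventually_gt_atTop 0] with μ hμ
    have hsq : (μ ^ ((2:ℝ)/3)) ^ 2 / (2 * μ) = 1 / 2 * μ ^ ((1:ℝ)/3) := by
      rw [← rpow_natCast, ← rpow_mul hμ.le, show (2:ℝ)/3 * (2:ℕ) = 1 + 1/3 by norm_num,
        rpow_add hμ, rpow_one]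
      field_simp
    calc μ * ∑ k ∈ range ⌈μ - μ ^ ((2:ℝ)/3)⌉₊, exp (-μ) * μ ^ k / ((1 + k) * k !)
        ≤ μ * ∑ k ∈ range ⌈μ - μ ^ ((2:ℝ)/3)⌉₊, exp (-μ) * μ ^ k / k ! := by
          gcongr with k
          exact le_mul_of_one_le_left (by positivity) (by simp)
      _ ≤ μ * exp (-(1 / 2) * μ ^ ((1:ℝ)/3)) := by
          gcongr
          rw [neg_mul, ← hsq]
          exact poisson_lower_tail_le_exp_neg_sq hμ (by positivity)
end
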